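/- arXiv:2301.11567 — 2 statements merged into one kernel-verified Lean document; each statement's English description precedes it below -/
import Mathlib

section
/- Suppose β(m,I,x) is strictly decreasing in its first argument m, and let m1, m2 : ℝ → [0,∞) be continuous with m1(x) < m2(x) for all x ∈ [L1,L2]. For i = 1, 2 set a_i(x) := (σ/μ1)·β(m_i(x),0,x) − μ2 − γ(b(x),0,x), and assume each a_i is Lipschitz continuous and attains its maximum over [L1,L2] at an interior point. Then λ_p((L1,L2), d, a_2) < λ_p((L1,L2), d, a_1); that is, the generalized principal eigenvalue is strictly decreasing in the media-coverage function m. -/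
/-!
Every admissible pair `(λ, φ)` for `a₁` is admissible with `λ - ε` for `a₂` as soon as
`a₂ + ε ≤ a₁`, so `λ_p(a₂) + ε ≤ λ_p(a₁)`. Since `β` is strictly decreasing in `m` and
`m₁ < m₂`, the gap `a₁ - a₂ = (σ/μ₁)(β(m₁,0,·) - β(m₂,0,·))` is positive and continuous on the
compact interval `[L₁, L₂]`, hence bounded below by some `ε > 0`.
-/

open MeasureTheory Set Filter Topology

noncomputable section

def KernelJ (J : ℝ → ℝ) : Prop :=
  Continuous J ∧ (∀ x, 0 ≤ J x) ∧ (∃ C, ∀ x, J x ≤ C) ∧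
    (∀ x, J (-x) = J x) ∧ 0 < J 0 ∧ (∫ x : ℝ, J x) = 1

/-- The generalized principal eigenvalue of the nonlocal operator
`d∫_{L1}^{L2} J(x-y)φ(y)dy - dφ(x) + a(x)φ(x)` on `(L1, L2)`. -/
def lambdaP (J : ℝ → ℝ) (L1 L2 d : ℝ) (a : ℝ → ℝ) : ℝ :=
  sInf {lam : ℝ | ∃ φ : ℝ → ℝ, ContinuousOn φ (Icc L1 L2) ∧
    (∀ x ∈ Icc L1 L2, 0 < φ x) ∧
    ∀ x ∈ Ioo L1 L2,
      d * (∫ y in L1..L2, J (x - y) * φ y) - d * φ x + a x * φ x ≤ lam * φ x}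

def lambdaPSet (J : ℝ → ℝ) (L1 L2 d : ℝ) (a : ℝ → ℝ) : Set ℝ :=
  {lam : ℝ | ∃ φ : ℝ → ℝ, ContinuousOn φ (Icc L1 L2) ∧
    (∀ x ∈ Icc L1 L2, 0 < φ x) ∧
    ∀ x ∈ Ioo L1 L2,
      d * (∫ y in L1..L2, J (x - y) * φ y) - d * φ x + a x * φ x ≤ lam * φ x}

section lambdaPSet

variable {J : ℝ → ℝ} {L1 L2 d : ℝ}

theorem lambdaP_eq_sInf (a : ℝ → ℝ) : lambdaP J L1 L2 d a = sInf (lambdaPSet J L1 L2 d a) :=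
  rfl

theorem sub_mem_lambdaPSet_of_add_le {a a' : ℝ → ℝ} {ε lam : ℝ}
    (hε : ∀ x ∈ Ioo L1 L2, a' x + ε ≤ a x) (hlam : lam ∈ lambdaPSet J L1 L2 d a) :
    lam - ε ∈ lambdaPSet J L1 L2 d a' := by
  obtain ⟨φ, hφc, hφpos, hφ⟩ := hlam
  refine ⟨φ, hφc, hφpos, fun x hx => ?_⟩
  have hφx := hφpos x (Ioo_subset_Icc_self hx)
  nlinarith [hφ x hx, mul_le_mul_of_nonneg_right (hε x hx) hφx.le]

/-- The constant test function `φ = 1` is admissible. -/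
theorem lambdaPSet_nonempty (hL : L1 ≤ L2) (hd : 0 ≤ d) (hJc : Continuous J) {C : ℝ}
    (hJC : ∀ x, J x ≤ C) {a : ℝ → ℝ} {A : ℝ} (hA : ∀ x ∈ Ioo L1 L2, a x ≤ A) :
    (lambdaPSet J L1 L2 d a).Nonempty := by
  refine ⟨d * (C * (L2 - L1)) + A, fun _ => 1, continuousOn_const, fun _ _ => one_pos,
    fun x hx => ?_⟩
  have hint : (∫ y in L1..L2, J (x - y)) ≤ C * (L2 - L1) := by
    calc (∫ y in L1..L2, J (x - y)) ≤ ∫ _ in L1..L2, C :=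
          intervalIntegral.integral_mono_on hL
            ((hJc.comp (continuous_sub_left x)).intervalIntegrable _ _)
            intervalIntegrable_const fun y _ => hJC (x - y)
      _ = C * (L2 - L1) := by simp [mul_comm]
  simp only [mul_one]
  nlinarith [mul_le_mul_of_nonneg_left hint hd, hA x hx]

theorem bddBelow_lambdaPSet (hL : L1 < L2) (hd : 0 ≤ d) (hJ : ∀ x, 0 ≤ J x) (a : ℝ → ℝ) :
    BddBelow (lambdaPSet J L1 L2 d a) := by
  obtain ⟨x, hx⟩ := nonempty_Ioo.2 hL
  refine ⟨a x - d, fun lam ⟨φ, _, hφpos, hφ⟩ => ?_⟩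
  have hint : 0 ≤ ∫ y in L1..L2, J (x - y) * φ y :=
    intervalIntegral.integral_nonneg hL.le fun y hy => mul_nonneg (hJ _) (hφpos y hy).le
  nlinarith [hφ x hx, hφpos x (Ioo_subset_Icc_self hx), mul_nonneg hd hint]

theorem lambdaP_add_le_of_add_le {a a' : ℝ → ℝ} {ε : ℝ}
    (hne : (lambdaPSet J L1 L2 d a).Nonempty) (hbdd : BddBelow (lambdaPSet J L1 L2 d a'))
    (hε : ∀ x ∈ Ioo L1 L2, a' x + ε ≤ a x) :
    lambdaP J L1 L2 d a' + ε ≤ lambdaP J L1 L2 d a := by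
  rw [lambdaP_eq_sInf, lambdaP_eq_sInf]
  exact le_csInf hne fun lam hlam =>
    le_sub_iff_add_le.1 (csInf_le hbdd (sub_mem_lambdaPSet_of_add_le hε hlam))

end lambdaPSet

theorem lambdaP_strictAnti_media_general
    (J : ℝ → ℝ) (d σ μ1 μ2 L1 L2 : ℝ) (b m1 m2 : ℝ → ℝ)
    (β γ : ℝ → ℝ → ℝ → ℝ) (a1 a2 : ℝ → ℝ)
    (hJ : KernelJ J) (hd : 0 < d) (hσ : 0 < σ) (hμ1 : 0 < μ1)
    (hL : L1 < L2)
    (hβstrict : ∀ I' x, StrictAntiOn (fun m' => β m' I' x) (Ici 0))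
    (hm1nn : ∀ x, 0 ≤ m1 x)
    (hm2nn : ∀ x, 0 ≤ m2 x)
    (hm12 : ∀ x ∈ Icc L1 L2, m1 x < m2 x)
    (ha1 : ∀ x, a1 x = σ / μ1 * β (m1 x) 0 x - μ2 - γ (b x) 0 x)
    (ha2 : ∀ x, a2 x = σ / μ1 * β (m2 x) 0 x - μ2 - γ (b x) 0 x)
    (ha1L : ∃ K, LipschitzWith K a1) (ha2L : ∃ K, LipschitzWith K a2) :
    lambdaP J L1 L2 d a2 < lambdaP J L1 L2 d a1 := by
  obtain ⟨hJc, hJnn, ⟨C, hJC⟩, -, -, -⟩ := hJ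
  have ha1c := ha1L.choose_spec.continuous
  have ha2c := ha2L.choose_spec.continuous
  have hgap : ∀ x ∈ Icc L1 L2, 0 < a1 x - a2 x := fun x hx => by
    have hdiff : a1 x - a2 x = σ / μ1 * (β (m1 x) 0 x - β (m2 x) 0 x) := by
      rw [ha1, ha2]; ring
    rw [hdiff]
    exact mul_pos (div_pos hσ hμ1) (sub_pos.2 (hβstrict 0 x (hm1nn x) (hm2nn x) (hm12 x hx)))
  obtain ⟨ε, hεpos, hε⟩ : ∃ ε > 0, ∀ x ∈ Icc L1 L2, ε ≤ a1 x - a2 x :=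
    isCompact_Icc.exists_forall_le' (ha1c.sub ha2c).continuousOn hgap
  obtain ⟨A, hA⟩ := (isCompact_Icc (a := L1) (b := L2)).bddAbove_image ha1c.continuousOn
  have hne := lambdaPSet_nonempty hL.le hd.le hJc hJC fun x hx =>
    hA ⟨x, Ioo_subset_Icc_self hx, rfl⟩
  have hle := lambdaP_add_le_of_add_le hne (bddBelow_lambdaPSet hL hd.le hJnn a2)
    fun x hx => by linarith [hε x (Ioo_subset_Icc_self hx)]
  linarith

/-- Theorem 3.2 (i): the generalized principal eigenvalue is strictly decreasing
in the media-coverage function `m`. -/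
theorem lambdaP_strictAnti_media
    (J : ℝ → ℝ) (d σ μ1 μ2 L1 L2 : ℝ) (b m1 m2 : ℝ → ℝ)
    (β γ : ℝ → ℝ → ℝ → ℝ) (a1 a2 : ℝ → ℝ)
    (hJ : KernelJ J) (hd : 0 < d) (hσ : 0 < σ) (hμ1 : 0 < μ1) (hμ2 : 0 < μ2)
    (hL : L1 < L2)
    (hb : Continuous b) (hb0 : ∀ x, 0 ≤ b x)
    (hβL : ∃ K, LipschitzWith K fun p : ℝ × ℝ × ℝ => β p.1 p.2.1 p.2.2)
    (hγL : ∃ K, LipschitzWith K fun p : ℝ × ℝ × ℝ => γ p.1 p.2.1 p.2.2)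
    (hβ0 : ∀ m' I' x, 0 ≤ β m' I' x) (hγ0 : ∀ b' I' x, 0 ≤ γ b' I' x)
    (hβstrict : ∀ I' x, StrictAntiOn (fun m' => β m' I' x) (Ici 0))
    (hm1 : Continuous m1) (hm1nn : ∀ x, 0 ≤ m1 x)
    (hm2 : Continuous m2) (hm2nn : ∀ x, 0 ≤ m2 x)
    (hm12 : ∀ x ∈ Icc L1 L2, m1 x < m2 x)
    (ha1 : ∀ x, a1 x = σ / μ1 * β (m1 x) 0 x - μ2 - γ (b x) 0 x)
    (ha2 : ∀ x, a2 x = σ / μ1 * β (m2 x) 0 x - μ2 - γ (b x) 0 x)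
    (ha1L : ∃ K, LipschitzWith K a1) (ha2L : ∃ K, LipschitzWith K a2)
    (ha1H : ∃ x0 ∈ Ioo L1 L2, ∀ x ∈ Icc L1 L2, a1 x ≤ a1 x0)
    (ha2H : ∃ x0 ∈ Ioo L1 L2, ∀ x ∈ Icc L1 L2, a2 x ≤ a2 x0) :
    lambdaP J L1 L2 d a2 < lambdaP J L1 L2 d a1 :=
  lambdaP_strictAnti_media_general J d σ μ1 μ2 L1 L2 b m1 m2 β γ a1 a2 hJ hd hσ hμ1 hL hβstrict
    hm1nn hm2nn hm12 ha1 ha2 ha1L ha2L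
end
end

section
/- Fix reals L1 < L2 and let a : ℝ → ℝ be Lipschitz continuous and attain its maximum over [L1,L2] at an interior point of (L1,L2). Then lim_{d→0⁺} λ_p((L1,L2), d, a) = max_{x∈[L1,L2]} a(x). -/
/-! Testing with the constant eigenfunction `1` gives `λ_p ≤ max a`, because the nonlocal term
`d ∫ J(x-y) dy` is at most `d`. Conversely, evaluating any admissible inequality at an interior
maximum point `x0` of `a`, where the integral term is nonnegative, gives `a x0 - d ≤ λ`. Hence
`max a - d ≤ λ_p ≤ max a`. -/

open MeasureTheory Set Filter Topology

noncomputable section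

section

variable {J : ℝ → ℝ} {L1 L2 d : ℝ} {a : ℝ → ℝ}

theorem intervalIntegral_comp_sub_le_one (hJnn : ∀ x, 0 ≤ J x) (hJ : ∫ x : ℝ, J x = 1)
    (hL : L1 ≤ L2) (x : ℝ) : ∫ y in L1..L2, J (x - y) ≤ 1 := by
  rw [intervalIntegral.integral_comp_sub_left J x,
    intervalIntegral.integral_of_le (by linarith : x - L2 ≤ x - L1), ← hJ]
  exact setIntegral_le_integral (integrable_of_integral_eq_one hJ) (.of_forall hJnn)

theorem sub_le_of_mem_lambdaPSet (hJnn : ∀ x, 0 ≤ J x) (hd : 0 ≤ d) {x0 : ℝ}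
    (hx0 : x0 ∈ Ioo L1 L2) {lam : ℝ} (hlam : lam ∈ lambdaPSet J L1 L2 d a) :
    a x0 - d ≤ lam := by
  obtain ⟨φ, -, hφpos, hineq⟩ := hlam
  have hφx0 : 0 < φ x0 := hφpos x0 (Ioo_subset_Icc_self hx0)
  have hint : 0 ≤ ∫ y in L1..L2, J (x0 - y) * φ y :=
    intervalIntegral.integral_nonneg (hx0.1.trans hx0.2).le
      fun y hy => mul_nonneg (hJnn _) (hφpos y hy).le
  have h := hineq x0 hx0
  refine le_of_mul_le_mul_right ?_ hφx0
  nlinarith [mul_nonneg hd hint]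

theorem mem_lambdaPSet_of_le (hJnn : ∀ x, 0 ≤ J x) (hJ : ∫ x : ℝ, J x = 1) (hd : 0 ≤ d)
    (hL : L1 ≤ L2) {M : ℝ} (haM : ∀ x ∈ Ioo L1 L2, a x ≤ M) :
    M ∈ lambdaPSet J L1 L2 d a := by
  refine ⟨fun _ => 1, continuousOn_const, fun _ _ => one_pos, fun x hx => ?_⟩
  have h := mul_le_mul_of_nonneg_left (intervalIntegral_comp_sub_le_one hJnn hJ hL x) hd
  simp only [mul_one] at h ⊢
  linarith [haM x hx]

theorem sub_le_lambdaP_le (hJnn : ∀ x, 0 ≤ J x) (hJ : ∫ x : ℝ, J x = 1) (hd : 0 ≤ d)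
    {x0 : ℝ} (hx0 : x0 ∈ Ioo L1 L2) (hmax : ∀ x ∈ Ioo L1 L2, a x ≤ a x0) :
    a x0 - d ≤ lambdaP J L1 L2 d a ∧ lambdaP J L1 L2 d a ≤ a x0 := by
  have hmem := mem_lambdaPSet_of_le hJnn hJ hd (hx0.1.trans hx0.2).le hmax
  have hlow : a x0 - d ∈ lowerBounds (lambdaPSet J L1 L2 d a) :=
    fun _ => sub_le_of_mem_lambdaPSet hJnn hd hx0
  exact ⟨le_csInf ⟨_, hmem⟩ hlow, csInf_le ⟨_, hlow⟩ hmem⟩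

end

theorem lambdaP_limit_d_zero_general
    (J : ℝ → ℝ) (L1 L2 : ℝ) (a : ℝ → ℝ)
    (hJ : KernelJ J)
    (haH : ∃ x0 ∈ Ioo L1 L2, ∀ x ∈ Icc L1 L2, a x ≤ a x0) :
    Tendsto (fun d => lambdaP J L1 L2 d a) (𝓝[>] 0)
      (𝓝 (sSup (a '' Icc L1 L2))) := by
  obtain ⟨x0, hx0, hmax⟩ := haH
  obtain ⟨-, hJnn, -, -, -, hJint⟩ := hJ
  have hsup : sSup (a '' Icc L1 L2) = a x0 :=
    IsGreatest.csSup_eq ⟨mem_image_of_mem a (Ioo_subset_Icc_self hx0),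
      forall_mem_image.2 hmax⟩
  have hbounds : ∀ᶠ d in 𝓝[>] (0 : ℝ),
      a x0 - d ≤ lambdaP J L1 L2 d a ∧ lambdaP J L1 L2 d a ≤ a x0 :=
    eventually_nhdsWithin_of_forall fun d hd =>
      sub_le_lambdaP_le hJnn hJint (le_of_lt hd) hx0
        fun x hx => hmax x (Ioo_subset_Icc_self hx)
  have hlim : Tendsto (fun d : ℝ => a x0 - d) (𝓝[>] 0) (𝓝 (a x0)) :=
    ((continuous_const.sub continuous_id).tendsto' 0 (a x0) (sub_zero _)).mono_left
      nhdsWithin_le_nhds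
  rw [hsup]
  exact tendsto_of_tendsto_of_tendsto_of_le_of_le' hlim tendsto_const_nhds
    (hbounds.mono fun _ h => h.1) (hbounds.mono fun _ h => h.2)

/-- Theorem 3.4 (ii): `λ_p((L1,L2), d, a) → max_{x∈[L1,L2]} a(x)` as `d → 0⁺`. -/
theorem lambdaP_limit_d_zero
    (J : ℝ → ℝ) (L1 L2 : ℝ) (a : ℝ → ℝ)
    (hJ : KernelJ J) (hL : L1 < L2)
    (haL : ∃ K, LipschitzWith K a)
    (haH : ∃ x0 ∈ Ioo L1 L2, ∀ x ∈ Icc L1 L2, a x ≤ a x0) :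
    Tendsto (fun d => lambdaP J L1 L2 d a) (𝓝[>] 0)
      (𝓝 (sSup (a '' Icc L1 L2))) :=
  lambdaP_limit_d_zero_general J L1 L2 a hJ haH
end
end
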